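/- arXiv:2203.10838 — 2 statements merged into one kernel-verified Lean document; each statement's English description precedes it below -/
import Mathlib

section
/- Let A ∈ ℝ^{m×n} have nonzero rows a_1^T,…,a_m^T, let W = Diag(w_1,…,w_m), P = Diag(p_1,…,p_m) (a probability distribution), D = Diag(‖a_1‖₂,…,‖a_m‖₂), and assume the coupling P W D^{-2} = (α/‖A‖_F²) I for some α > 0. Let τ be a tuple of η indices drawn i.i.d. with probabilities p_i and M = (1/η) Σ_{i∈τ} w_i e_i e_i^T / ‖a_i‖₂². Then E[M] = (α/‖A‖_F²) I and E[M^T A A^T M] = (1/η)(α/‖A‖_F²) W + α² (1 − 1/η) A A^T / ‖A‖_F⁴. -/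
open Matrix Finset

noncomputable section

/-- Euclidean dot product of two vectors. -/
def dot {n : ℕ} (x y : Fin n → ℝ) : ℝ := ∑ j, x j * y j

/-- Squared Euclidean norm of a vector. -/
def norm2Sq {n : ℕ} (x : Fin n → ℝ) : ℝ := ∑ j, x j ^ 2

/-- ℓ¹ norm of a vector. -/
def l1Norm {n : ℕ} (x : Fin n → ℝ) : ℝ := ∑ j, |x j|

/-- Squared Euclidean norm of the i-th row of a matrix. -/
def rowNormSq {m n : ℕ} (A : Matrix (Fin m) (Fin n) ℝ) (i : Fin m) : ℝ := ∑ j, A i j ^ 2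

/-- Squared Frobenius norm of a matrix. -/
def frobSq {m n : ℕ} (A : Matrix (Fin m) (Fin n) ℝ) : ℝ := ∑ i, ∑ j, A i j ^ 2

/-- Largest singular value (spectral norm) of a matrix:  sup over `x ≠ 0` of `‖Ax‖₂/‖x‖₂`. -/
def sigmaMax {m n : ℕ} (A : Matrix (Fin m) (Fin n) ℝ) : ℝ :=
  sSup {t : ℝ | ∃ x : Fin n → ℝ, x ≠ 0 ∧
    t = Real.sqrt (norm2Sq (A.mulVec x)) / Real.sqrt (norm2Sq x)}

/-- `σ̃_min(A)`: the minimum over nonzero column-submatrices `A_J` of the smallest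
singular value `σ_min(A_J) = min_{x ≠ 0, supp x ⊆ J} ‖Ax‖₂/‖x‖₂`. -/
def sigmaTildeMin {m n : ℕ} (A : Matrix (Fin m) (Fin n) ℝ) : ℝ :=
  sInf {t : ℝ | ∃ J : Finset (Fin n), (∃ i j, j ∈ J ∧ A i j ≠ 0) ∧
    ∃ x : Fin n → ℝ, x ≠ 0 ∧ (∀ j ∉ J, x j = 0) ∧
      t = Real.sqrt (norm2Sq (A.mulVec x)) / Real.sqrt (norm2Sq x)}

/-- `|x|_min`: the smallest absolute value of the nonzero entries of `x`. -/
def minAbs {n : ℕ} (x : Fin n → ℝ) : ℝ := sInf {t : ℝ | ∃ j, x j ≠ 0 ∧ t = |x j|}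

/-- Componentwise soft shrinkage operator `S_λ(x) = max{|x| - λ, 0}·sign(x)`. -/
def softShrink {n : ℕ} (lam : ℝ) (x : Fin n → ℝ) : Fin n → ℝ :=
  fun j => Real.sign (x j) * max (|x j| - lam) 0

/-- The objective `f(x) = λ‖x‖₁ + ½‖x‖₂²`. -/
def fObj {n : ℕ} (lam : ℝ) (x : Fin n → ℝ) : ℝ := lam * l1Norm x + norm2Sq x / 2

/-- `g` is a subgradient of `f` at `x`. -/
def IsSubgrad {n : ℕ} (f : (Fin n → ℝ) → ℝ) (x g : Fin n → ℝ) : Prop :=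
  ∀ y, f x + dot g (y - x) ≤ f y

/-- Bregman distance `D_f^{x*}(x, y) = f(y) - f(x) - ⟨x*, y - x⟩`. -/
def breg {n : ℕ} (f : (Fin n → ℝ) → ℝ) (xstar x y : Fin n → ℝ) : ℝ :=
  f y - f x - dot xstar (y - x)

/-- The random weighted sampling matrix `M = (1/η) Σ_{i∈τ} w_i e_i e_iᵀ / ‖a_i‖₂²`
associated with a tuple `τ` of `η` sampled row indices. -/
def Mmat {m n : ℕ} (A : Matrix (Fin m) (Fin n) ℝ) (w : Fin m → ℝ) (η : ℕ)
    (τ : Fin η → Fin m) : Matrix (Fin m) (Fin m) ℝ :=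
  (η : ℝ)⁻¹ • ∑ t, (w (τ t) / rowNormSq A (τ t)) • Matrix.single (τ t) (τ t) (1 : ℝ)

/-!
Write `c i = w i / ‖a_i‖²` and let `N i` count the draws of `τ` equal to `i`; then
`M = η⁻¹ Diag(c i N i)`, so both moments are read off from `E[N i] = η p i` and
`E[N i N j] = η δ_ij p i + η (η - 1) p i p j`. These follow because the weight `∏ t, p (τ t)`
factorises over the coordinates of `τ`, which makes distinct draws independent. The coupling says
precisely that `p i c i = α / ‖A‖_F²` for every `i`.
-/

section Sampling

variable {σ ι : Type*} [Fintype σ]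

def sampleCount [DecidableEq ι] (τ : σ → ι) (i : ι) : ℕ := #{s | τ s = i}

lemma sampleCount_eq_sum {R : Type*} [AddCommMonoidWithOne R] [DecidableEq ι]
    (τ : σ → ι) (i : ι) : (sampleCount τ i : R) = ∑ s, if τ s = i then 1 else 0 :=
  natCast_card_filter _ _

variable [DecidableEq σ] [Fintype ι] {R : Type*} [CommRing R] {p : ι → R}

lemma sum_prod_mul_prod (hp : ∑ i, p i = 1) (S : Finset σ) (g : σ → ι → R) :
    ∑ τ : σ → ι, (∏ t, p (τ t)) * ∏ t ∈ S, g t (τ t) = ∏ t ∈ S, ∑ i, p i * g t i := by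
  calc ∑ τ : σ → ι, (∏ t, p (τ t)) * ∏ t ∈ S, g t (τ t)
      = ∑ τ : σ → ι, ∏ t, p (τ t) * (if t ∈ S then g t (τ t) else 1) := by
        refine sum_congr rfl fun τ _ => ?_
        rw [prod_mul_distrib, prod_ite_mem, univ_inter]
    _ = ∏ t, ∑ i, p i * (if t ∈ S then g t i else 1) :=
        (Fintype.prod_sum fun t i => p i * if t ∈ S then g t i else 1).symm
    _ = ∏ t ∈ S, ∑ i, p i * g t i := by
        simp_rw [mul_ite, mul_one, sum_ite_irrel, hp, prod_ite_mem, univ_inter]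

lemma sum_prod_mul_apply (hp : ∑ i, p i = 1) (s : σ) (f : ι → R) :
    ∑ τ : σ → ι, (∏ t, p (τ t)) * f (τ s) = ∑ i, p i * f i := by
  simpa only [prod_singleton] using sum_prod_mul_prod hp {s} fun _ => f

lemma sum_prod_mul_apply_mul_apply (hp : ∑ i, p i = 1) {s u : σ} (hsu : s ≠ u)
    (f g : ι → R) :
    ∑ τ : σ → ι, (∏ t, p (τ t)) * (f (τ s) * g (τ u)) = (∑ i, p i * f i) * ∑ i, p i * g i := by
  simpa only [prod_pair hsu, if_pos, if_neg hsu.symm] using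
    sum_prod_mul_prod hp {s, u} fun t => if t = s then f else g

variable [DecidableEq ι]

lemma expect_sampleCount (hp : ∑ i, p i = 1) (i : ι) :
    ∑ τ : σ → ι, (∏ t, p (τ t)) * (sampleCount τ i : R) = Fintype.card σ * p i := by
  simp_rw [sampleCount_eq_sum, mul_sum]
  rw [sum_comm, sum_congr rfl fun s _ => sum_prod_mul_apply hp s fun k => if k = i then 1 else 0]
  simp

lemma expect_sampleCount_mul (hp : ∑ i, p i = 1) (i j : ι) :
    ∑ τ : σ → ι, (∏ t, p (τ t)) * ((sampleCount τ i : R) * sampleCount τ j)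
      = Fintype.card σ * (if i = j then p i else 0)
        + Fintype.card σ * (Fintype.card σ - 1) * (p i * p j) := by
  set δ : R := if i = j then p i else 0
  have hpair : ∀ s u, ∑ τ : σ → ι, (∏ t, p (τ t)) *
      ((if τ s = i then 1 else 0) * (if τ u = j then 1 else 0))
        = if s = u then δ else p i * p j := by
    intro s u
    split_ifs with hsu
    · subst hsu
      rw [sum_prod_mul_apply hp s fun k => (if k = i then 1 else 0) * (if k = j then 1 else 0)]
      rcases eq_or_ne i j with rfl | hij
      · simp [δ]
      · simp [δ, hij, hij.symm]
    · rw [sum_prod_mul_apply_mul_apply hp hsu (fun k => if k = i then 1 else 0)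
        fun k => if k = j then 1 else 0]
      simp
  have hrow : ∀ s : σ, ∑ u : σ, (if s = u then δ else p i * p j)
      = δ + (Fintype.card σ - 1) * (p i * p j) := by
    intro s
    rw [← add_sum_erase _ _ (mem_univ s), if_pos rfl,
      sum_congr rfl fun u hu => if_neg (ne_of_mem_erase hu).symm, sum_const,
      card_erase_of_mem (mem_univ s), card_univ, nsmul_eq_mul,
      Nat.cast_sub (Fintype.card_pos_iff.mpr ⟨s⟩), Nat.cast_one]
  calc ∑ τ : σ → ι, (∏ t, p (τ t)) * ((sampleCount τ i : R) * sampleCount τ j)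
      = ∑ s, ∑ u, ∑ τ : σ → ι, (∏ t, p (τ t)) *
          ((if τ s = i then 1 else 0) * (if τ u = j then 1 else 0)) := by
        simp_rw [sampleCount_eq_sum, sum_mul_sum, mul_sum]
        rw [sum_comm]
        exact sum_congr rfl fun s _ => sum_comm
    _ = _ := by
        simp_rw [hpair, hrow, sum_const, card_univ, nsmul_eq_mul]
        ring

end Sampling

section SamplingMatrix

variable {m n η : ℕ} {A : Matrix (Fin m) (Fin n) ℝ} {w p : Fin m → ℝ}

lemma Mmat_eq_diagonal (τ : Fin η → Fin m) :
    Mmat A w η τ = diagonal fun i => (η : ℝ)⁻¹ * (w i / rowNormSq A i) * sampleCount τ i := by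
  ext i j
  simp only [Mmat, Matrix.smul_apply, Matrix.sum_apply, Matrix.single_apply, diagonal_apply,
    sampleCount_eq_sum, smul_eq_mul, mul_sum]
  rcases eq_or_ne i j with rfl | hij
  · rw [if_pos rfl]
    refine sum_congr rfl fun t _ => ?_
    by_cases ht : τ t = i <;> simp [ht]
  · rw [if_neg hij]
    refine sum_eq_zero fun t _ => ?_
    rw [if_neg fun h => hij (h.1.symm.trans h.2), mul_zero, mul_zero]

lemma diagonal_transpose_mul_mul_diagonal_apply {k α : Type*} [Fintype k] [DecidableEq k]
    [Semiring α] (d : k → α) (B : Matrix k k α) (i j : k) :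
    ((diagonal d)ᵀ * B * diagonal d) i j = d i * B i j * d j := by
  rw [diagonal_transpose, mul_diagonal, diagonal_mul]

theorem expect_Mmat (hη : η ≠ 0) (hp : ∑ i, p i = 1) {κ : ℝ}
    (hκ : ∀ i, p i * w i / rowNormSq A i = κ) :
    ∑ τ : Fin η → Fin m, (∏ t, p (τ t)) • Mmat A w η τ = κ • (1 : Matrix (Fin m) (Fin m) ℝ) := by
  ext i j
  simp only [Mmat_eq_diagonal, Matrix.sum_apply, Matrix.smul_apply, diagonal_apply, one_apply,
    smul_eq_mul]
  rcases eq_or_ne i j with rfl | hij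
  · simp only [if_true]
    calc ∑ τ : Fin η → Fin m, (∏ t, p (τ t)) * ((η : ℝ)⁻¹ * (w i / rowNormSq A i) * sampleCount τ i)
        = (η : ℝ)⁻¹ * (w i / rowNormSq A i) *
            ∑ τ : Fin η → Fin m, (∏ t, p (τ t)) * sampleCount τ i := by
          rw [mul_sum]; exact sum_congr rfl fun τ _ => by ring
      _ = κ * 1 := by
          rw [expect_sampleCount hp, Fintype.card_fin, ← hκ i]; field_simp
  · simp [hij]

lemma mul_transpose_self_apply_self (i : Fin m) : (A * Aᵀ) i i = rowNormSq A i := by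
  simp [mul_apply, rowNormSq, sq]

lemma expect_Mmat_transpose_mul_mul_apply (hη : η ≠ 0) (hp : ∑ i, p i = 1) (i j : Fin m) :
    (∑ τ : Fin η → Fin m, (∏ t, p (τ t)) • ((Mmat A w η τ)ᵀ * A * Aᵀ * Mmat A w η τ)) i j
      = w i / rowNormSq A i * (w j / rowNormSq A j) * (A * Aᵀ) i j *
          ((η : ℝ)⁻¹ * (if i = j then p i else 0) + (1 - (η : ℝ)⁻¹) * (p i * p j)) := by
  set c : Fin m → ℝ := fun i => w i / rowNormSq A i
  simp only [Matrix.mul_assoc _ A, Mmat_eq_diagonal, Matrix.sum_apply, Matrix.smul_apply,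
    diagonal_transpose_mul_mul_diagonal_apply, smul_eq_mul]
  calc ∑ τ : Fin η → Fin m, (∏ t, p (τ t)) * ((η : ℝ)⁻¹ * c i * sampleCount τ i * (A * Aᵀ) i j *
          ((η : ℝ)⁻¹ * c j * sampleCount τ j))
      = (η : ℝ)⁻¹ ^ 2 * c i * c j * (A * Aᵀ) i j *
          ∑ τ : Fin η → Fin m, (∏ t, p (τ t)) * ((sampleCount τ i : ℝ) * sampleCount τ j) := by
        rw [mul_sum]; exact sum_congr rfl fun τ _ => by ring
    _ = _ := by
        rw [expect_sampleCount_mul hp, Fintype.card_fin]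
        field_simp
        ring

theorem expect_Mmat_transpose_mul_mul (hη : η ≠ 0) (hp : ∑ i, p i = 1) {κ : ℝ}
    (hκ : ∀ i, p i * w i / rowNormSq A i = κ) :
    ∑ τ : Fin η → Fin m, (∏ t, p (τ t)) • ((Mmat A w η τ)ᵀ * A * Aᵀ * Mmat A w η τ)
      = ((η : ℝ)⁻¹ * κ) • diagonal w + (κ ^ 2 * (1 - (η : ℝ)⁻¹)) • (A * Aᵀ) := by
  have hc : ∀ i, p i * (w i / rowNormSq A i) = κ := fun i => by rw [← hκ i, mul_div_assoc]
  have hdiag : ∀ i, (w i / rowNormSq A i) ^ 2 * rowNormSq A i * p i = κ * w i := by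
    intro i
    rw [← hκ i]
    -- for a zero row, `x / 0 = 0` makes both sides vanish
    rcases eq_or_ne (rowNormSq A i) 0 with h0 | h0
    · simp [h0]
    · field_simp
  ext i j
  rw [expect_Mmat_transpose_mul_mul_apply hη hp]
  simp only [Matrix.add_apply, Matrix.smul_apply, diagonal_apply, smul_eq_mul]
  rcases eq_or_ne i j with rfl | hij
  · simp only [if_true, mul_transpose_self_apply_self]
    linear_combination (η : ℝ)⁻¹ * hdiag i
      + (1 - (η : ℝ)⁻¹) * rowNormSq A i * (p i * (w i / rowNormSq A i) + κ) * hc i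
  · simp only [if_neg hij]
    linear_combination (1 - (η : ℝ)⁻¹) * (A * Aᵀ) i j * (p j * (w j / rowNormSq A j)) * hc i
      + (1 - (η : ℝ)⁻¹) * (A * Aᵀ) i j * κ * hc j

end SamplingMatrix

theorem moments_under_coupling_general {m n η : ℕ} (hη : 0 < η)
    (A : Matrix (Fin m) (Fin n) ℝ)
    (w p : Fin m → ℝ) (hp1 : ∑ i, p i = 1)
    (α : ℝ)
    (hcoup : ∀ i, p i * w i / rowNormSq A i = α / frobSq A) :
    (∑ τ : Fin η → Fin m, (∏ t, p (τ t)) • Mmat A w η τ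
        = (α / frobSq A) • (1 : Matrix (Fin m) (Fin m) ℝ)) ∧
    (∑ τ : Fin η → Fin m, (∏ t, p (τ t)) • ((Mmat A w η τ)ᵀ * A * Aᵀ * Mmat A w η τ)
        = ((η : ℝ)⁻¹ * (α / frobSq A)) • Matrix.diagonal w
          + (α ^ 2 * (1 - (η : ℝ)⁻¹) / frobSq A ^ 2) • (A * Aᵀ)) := by
  refine ⟨expect_Mmat hη.ne' hp1 hcoup, ?_⟩
  rw [expect_Mmat_transpose_mul_mul hη.ne' hp1 hcoup, div_pow, div_mul_eq_mul_div]

/-- Under the coupling `P W D⁻² = (α/‖A‖_F²) I`, the sampling matrix `M`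
satisfies `E[M] = (α/‖A‖_F²) I` and
`E[Mᵀ A Aᵀ M] = (1/η)(α/‖A‖_F²) W + α²(1 − 1/η) A Aᵀ/‖A‖_F⁴`. -/
theorem moments_under_coupling {m n η : ℕ} (hη : 0 < η)
    (A : Matrix (Fin m) (Fin n) ℝ) (hA : ∀ i, A i ≠ 0)
    (w p : Fin m → ℝ) (hp0 : ∀ i, 0 ≤ p i) (hp1 : ∑ i, p i = 1)
    (α : ℝ) (hα : 0 < α)
    (hcoup : ∀ i, p i * w i / rowNormSq A i = α / frobSq A) :
    (∑ τ : Fin η → Fin m, (∏ t, p (τ t)) • Mmat A w η τ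
        = (α / frobSq A) • (1 : Matrix (Fin m) (Fin m) ℝ)) ∧
    (∑ τ : Fin η → Fin m, (∏ t, p (τ t)) • ((Mmat A w η τ)ᵀ * A * Aᵀ * Mmat A w η τ)
        = ((η : ℝ)⁻¹ * (α / frobSq A)) • Matrix.diagonal w
          + (α ^ 2 * (1 - (η : ℝ)⁻¹) / frobSq A ^ 2) • (A * Aᵀ)) :=
  moments_under_coupling_general hη A w p hp1 α hcoup
end
end

section
/- Under the hypotheses of the linear-convergence theorem for randomized sparse Kaczmarz with averaging (consistent system with x̂ the unique solution of min λ‖x‖₁ + ½‖x‖₂² s.t. Ax = b; coupling P W D^{-2} = (α/‖A‖_F²) I; η > 1; 0 < α < 2 (η − ½ σ_max(W)) ‖A‖_F² / (σ_max(A)²(η − 1)); iterates x_k produced by Algorithm RSKA starting from x₀ = x₀* = 0), the iterates satisfy for all k: E[ ‖x_k − x̂‖₂² ] ≤ 2 q^k f(x̂), where q = 1 − L(α)/(γ‖A‖_F²), L(α) = α − (α/(2η))((α/‖A‖_F²)(η−1)σ_max(A)² + σ_max(W)), γ = (|x̂|_min + 2λ)/(|x̂|_min σ̃_min(A)²), and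 f(x) = λ‖x‖₁ + ½‖x‖₂². -/
open Matrix Finset

noncomputable section

/-- One step of the randomized sparse Kaczmarz method with averaging (RSKA) on the dual
variable: `x* ← x* − (1/η) Σ_{i∈τ} w_i (⟨a_i, S_λ(x*)⟩ − b_i)/‖a_i‖₂² · a_i`. -/
def rskaStep {m n : ℕ} (A : Matrix (Fin m) (Fin n) ℝ) (b : Fin m → ℝ) (lam : ℝ)
    (w : Fin m → ℝ) (η : ℕ) (xstar : Fin n → ℝ) (τ : Fin η → Fin m) : Fin n → ℝ :=
  xstar - (η : ℝ)⁻¹ •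
    ∑ t, ((w (τ t) * (dot (A (τ t)) (softShrink lam xstar) - b (τ t))) / rowNormSq A (τ t))
      • A (τ t)

/-- The RSKA dual iterates `x_k*` as a function of the history `σ` of sampled index tuples,
starting from `x₀* = 0`.  The primal iterate is `x_k = S_λ(x_k*)`. -/
def rskaSeq {m n : ℕ} (A : Matrix (Fin m) (Fin n) ℝ) (b : Fin m → ℝ) (lam : ℝ)
    (w : Fin m → ℝ) (η : ℕ) : (k : ℕ) → (Fin k → Fin η → Fin m) → (Fin n → ℝ)
  | 0, _ => 0
  | k + 1, σ =>
      rskaStep A b lam w η (rskaSeq A b lam w η k (fun i => σ i.castSucc)) (σ (Fin.last k))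

/-- Probability of a history `σ` of `k` i.i.d. tuples of `η` i.i.d. indices with
probabilities `p`. -/
def histProb {m η : ℕ} (p : Fin m → ℝ) (k : ℕ) (σ : Fin k → Fin η → Fin m) : ℝ :=
  ∏ i, ∏ t, p (σ i t)


/-!
The dual iterate `u = x_k*` is a subgradient of `f` at `x_k = S_λ(u)`, so the Bregman distance
`D(u) = D_f^{u}(x_k, x̂)` equals `f(x̂) - ⟨u, x̂⟩ + ‖S_λ u‖² / 2`; since `u ↦ ‖S_λ u‖² / 2` is
`1`-smooth, one averaged step `u ↦ u - (1/η) Σ_t d_{τ_t}` decreases `D` in expectation by the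
linear term minus half the second moment of the step. The coupling `P W D⁻² = (α/‖A‖_F²) I` makes
the mean step `(α/‖A‖_F²) Aᵀ (A x_k - b)`, and the expected decrease is at least
`L(α)/‖A‖_F² · ‖A x_k - b‖²`. Conversely `D(u) = D_{λ‖·‖₁} + ‖x_k - x̂‖² / 2`, where the `ℓ¹`
part is at most `(2λ/|x̂|_min) ‖x_k - x̂‖²` coordinatewise, and
`σ̃_min(A)² ‖x_k - x̂‖² ≤ ‖A x_k - b‖²`; this error bound `D ≤ γ ‖A x_k - b‖²` turns the decrease
into `E D_{k+1} ≤ q E D_k`. Finally `D_0 = f(x̂)` and `‖x_k - x̂‖² ≤ 2 D_k` by `1`-strong convexity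
of `f`.
-/

section SoftThreshold

variable {lam : ℝ}

def softThreshold (lam t : ℝ) : ℝ := Real.sign t * max (|t| - lam) 0

lemma softThreshold_cases (hlam : 0 ≤ lam) (t : ℝ) :
    (lam < t ∧ softThreshold lam t = t - lam) ∨ (t < -lam ∧ softThreshold lam t = t + lam) ∨
      (|t| ≤ lam ∧ softThreshold lam t = 0) := by
  unfold softThreshold
  rcases lt_or_ge lam t with h | h
  · left
    rw [Real.sign_of_pos (by linarith), abs_of_pos (by linarith), max_eq_left (by linarith)]
    exact ⟨h, one_mul _⟩
  rcases lt_or_ge t (-lam) with h' | h'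
  · right; left
    rw [Real.sign_of_neg (by linarith), abs_of_neg (by linarith), max_eq_left (by linarith)]
    exact ⟨h', by ring⟩
  · have ht : |t| ≤ lam := abs_le.2 ⟨h', h⟩
    right; right
    rw [max_eq_right (by linarith), mul_zero]
    exact ⟨ht, rfl⟩

lemma abs_sub_softThreshold_le (hlam : 0 ≤ lam) (t : ℝ) : |t - softThreshold lam t| ≤ lam := by
  rcases softThreshold_cases hlam t with ⟨-, hs⟩ | ⟨-, hs⟩ | ⟨ht, hs⟩ <;> rw [hs]
  · rw [sub_sub_cancel, abs_of_nonneg hlam]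
  · rw [sub_add_cancel_left, abs_neg, abs_of_nonneg hlam]
  · rwa [sub_zero]

/-- `t - S_λ(t)` is a subgradient of `λ|·|` at `S_λ(t)`. -/
lemma sub_softThreshold_mul_self (hlam : 0 ≤ lam) (t : ℝ) :
    (t - softThreshold lam t) * softThreshold lam t = lam * |softThreshold lam t| := by
  rcases softThreshold_cases hlam t with ⟨h, hs⟩ | ⟨h, hs⟩ | ⟨-, hs⟩ <;> rw [hs]
  · rw [abs_of_pos (by linarith)]; ring
  · rw [abs_of_neg (by linarith)]; ring
  · simp

lemma sub_softThreshold_mul_le (hlam : 0 ≤ lam) (t y : ℝ) :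
    (t - softThreshold lam t) * y ≤ lam * |y| :=
  (le_abs_self _).trans <| (abs_mul _ _).trans_le <|
    mul_le_mul_of_nonneg_right (abs_sub_softThreshold_le hlam t) (abs_nonneg y)

lemma abs_softThreshold_le (hlam : 0 ≤ lam) {c : ℝ} (hc : |c| ≤ lam) (t : ℝ) :
    |softThreshold lam t| ≤ |t - c| := by
  obtain ⟨hc₁, hc₂⟩ := abs_le.1 hc
  rcases softThreshold_cases hlam t with ⟨h, hs⟩ | ⟨h, hs⟩ | ⟨-, hs⟩ <;> rw [hs]
  · rw [abs_of_pos (by linarith)]; exact (by linarith : t - lam ≤ t - c).trans (le_abs_self _)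
  · rw [abs_of_neg (by linarith)]; exact (by linarith : -(t + lam) ≤ -(t - c)).trans (neg_le_abs _)
  · simp

/-- `t ↦ S_λ(t)² / 2`, the convex conjugate of `λ|·| + (·)² / 2`, is `1`-smooth. -/
lemma softThreshold_add_sq_le (hlam : 0 ≤ lam) (t d : ℝ) :
    softThreshold lam (t + d) ^ 2
      ≤ softThreshold lam t ^ 2 + 2 * softThreshold lam t * d + d ^ 2 := by
  have h := abs_softThreshold_le hlam (abs_sub_softThreshold_le hlam t) (t + d)
  rw [show t + d - (t - softThreshold lam t) = softThreshold lam t + d by ring] at h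
  nlinarith [sq_le_sq.2 h]

/-- The gap `λ|y| - (t - S_λ t) y` vanishes unless `y` and `S_λ t` have opposite signs, and then
`|y| ≤ |S_λ t - y|`. -/
lemma mul_sub_softThreshold_gap_le (hlam : 0 ≤ lam) {μ y : ℝ} (hμ : 0 ≤ μ)
    (hy : y ≠ 0 → μ ≤ |y|) (t : ℝ) :
    μ * (lam * |y| - (t - softThreshold lam t) * y) ≤ 2 * lam * (softThreshold lam t - y) ^ 2 := by
  have hgap : lam * |y| - (t - softThreshold lam t) * y = 0 ∨
      y ^ 2 ≤ (softThreshold lam t - y) ^ 2 := by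
    rcases softThreshold_cases hlam t with ⟨h, hs⟩ | ⟨h, hs⟩ | ⟨-, hs⟩ <;> rw [hs]
    · rcases le_or_gt 0 y with hy0 | hy0
      · left; rw [abs_of_nonneg hy0]; ring
      · right; nlinarith
    · rcases le_or_gt y 0 with hy0 | hy0
      · left; rw [abs_of_nonpos hy0]; ring
      · right; nlinarith
    · right; simp
  rcases hgap with h0 | hsq
  · rw [h0, mul_zero]; positivity
  rcases eq_or_ne y 0 with rfl | hy0
  · simp only [abs_zero, mul_zero, sub_zero]; positivity
  have hμy := hy hy0
  have hle := sub_softThreshold_mul_le hlam t (-y)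
  rw [abs_neg] at hle
  nlinarith [mul_le_mul_of_nonneg_left hμy (by positivity : (0:ℝ) ≤ 2 * lam * |y|), sq_abs y]

end SoftThreshold

section Vectors

variable {n : ℕ}

lemma norm2Sq_eq_dotProduct (x : Fin n → ℝ) : norm2Sq x = x ⬝ᵥ x := by
  simp only [norm2Sq, dotProduct, sq]

lemma norm2Sq_nonneg (x : Fin n → ℝ) : 0 ≤ norm2Sq x :=
  Finset.sum_nonneg fun _ _ => sq_nonneg _

lemma norm2Sq_pos {x : Fin n → ℝ} (hx : x ≠ 0) : 0 < norm2Sq x := by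
  refine lt_of_le_of_ne (norm2Sq_nonneg x) (Ne.symm ?_)
  rwa [norm2Sq_eq_dotProduct, Ne, dotProduct_self_eq_zero]

@[simp] lemma norm2Sq_zero : norm2Sq (0 : Fin n → ℝ) = 0 := by simp [norm2Sq]

lemma norm2Sq_add (x y : Fin n → ℝ) :
    norm2Sq (x + y) = norm2Sq x + 2 * (x ⬝ᵥ y) + norm2Sq y := by
  simp only [norm2Sq_eq_dotProduct, add_dotProduct, dotProduct_add, dotProduct_comm y x]
  ring

lemma norm2Sq_smul (c : ℝ) (x : Fin n → ℝ) : norm2Sq (c • x) = c ^ 2 * norm2Sq x := by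
  simp only [norm2Sq_eq_dotProduct, smul_dotProduct, dotProduct_smul, smul_eq_mul]
  ring

lemma norm2Sq_neg (x : Fin n → ℝ) : norm2Sq (-x) = norm2Sq x := by
  simp [norm2Sq_eq_dotProduct]

lemma sq_dotProduct_le (x y : Fin n → ℝ) : (x ⬝ᵥ y) ^ 2 ≤ norm2Sq x * norm2Sq y :=
  Finset.sum_mul_sq_le_sq_mul_sq _ x y

end Vectors

section Bregman

variable {n : ℕ} {lam : ℝ}

lemma softShrink_apply (lam : ℝ) (u : Fin n → ℝ) (j : Fin n) :
    softShrink lam u j = softThreshold lam (u j) := rfl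

/-- `D_f^{u}(S_λ u, x̂)`: the dual iterate `u` is a subgradient of `f = fObj lam` at the primal
iterate `S_λ u`. -/
def dualBreg (lam : ℝ) (xhat u : Fin n → ℝ) : ℝ := breg (fObj lam) u (softShrink lam u) xhat

/-- Fenchel–Young equality at `(S_λ u, u)`: `D = f(x̂) + f*(u) - ⟨u, x̂⟩` with
`f*(u) = ‖S_λ u‖² / 2`. -/
lemma dualBreg_eq_conj (hlam : 0 ≤ lam) (xhat u : Fin n → ℝ) :
    dualBreg lam xhat u = fObj lam xhat - u ⬝ᵥ xhat + norm2Sq (softShrink lam u) / 2 := by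
  have h j := sub_softThreshold_mul_self hlam (u j)
  simp only [dualBreg, breg, fObj, l1Norm, norm2Sq, dot, dotProduct, Pi.sub_apply,
    softShrink_apply, Finset.mul_sum, Finset.sum_div, ← Finset.sum_sub_distrib,
    ← Finset.sum_add_distrib]
  exact Finset.sum_congr rfl fun j _ => by linear_combination h j

/-- `D = D_{λ‖·‖₁} + ‖S_λ u - x̂‖² / 2`. -/
lemma dualBreg_eq_gap_add (hlam : 0 ≤ lam) (xhat u : Fin n → ℝ) :
    dualBreg lam xhat u = ∑ j, (lam * |xhat j| - (u j - softShrink lam u j) * xhat j)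
      + norm2Sq (softShrink lam u - xhat) / 2 := by
  have h j := sub_softThreshold_mul_self hlam (u j)
  simp only [dualBreg, breg, fObj, l1Norm, norm2Sq, dot, Pi.sub_apply,
    softShrink_apply, Finset.mul_sum, Finset.sum_div, ← Finset.sum_sub_distrib,
    ← Finset.sum_add_distrib]
  exact Finset.sum_congr rfl fun j _ => by linear_combination h j

lemma dualBreg_zero (hlam : 0 ≤ lam) (xhat : Fin n → ℝ) : dualBreg lam xhat 0 = fObj lam xhat := by
  have hS : softShrink lam (0 : Fin n → ℝ) = 0 := funext fun _ => by simp [softShrink]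
  rw [dualBreg_eq_conj hlam, hS]
  simp

lemma norm2Sq_softShrink_add_le (hlam : 0 ≤ lam) (u d : Fin n → ℝ) :
    norm2Sq (softShrink lam (u + d))
      ≤ norm2Sq (softShrink lam u) + 2 * (softShrink lam u ⬝ᵥ d) + norm2Sq d := by
  simp only [norm2Sq, dotProduct, Finset.mul_sum, ← Finset.sum_add_distrib]
  exact Finset.sum_le_sum fun j _ => by
    simpa only [softShrink_apply, Pi.add_apply, mul_assoc] using
      softThreshold_add_sq_le hlam (u j) (d j)

lemma dualBreg_add_le (hlam : 0 ≤ lam) (xhat u d : Fin n → ℝ) :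
    dualBreg lam xhat (u + d)
      ≤ dualBreg lam xhat u + (softShrink lam u - xhat) ⬝ᵥ d + norm2Sq d / 2 := by
  have h := norm2Sq_softShrink_add_le hlam u d
  rw [dualBreg_eq_conj hlam, dualBreg_eq_conj hlam, add_dotProduct, sub_dotProduct,
    dotProduct_comm xhat d]
  linarith

lemma norm2Sq_softShrink_sub_le (hlam : 0 ≤ lam) (xhat u : Fin n → ℝ) :
    norm2Sq (softShrink lam u - xhat) / 2 ≤ dualBreg lam xhat u := by
  rw [dualBreg_eq_gap_add hlam]
  exact le_add_of_nonneg_left <| Finset.sum_nonneg fun j _ =>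
    sub_nonneg.2 (sub_softThreshold_mul_le hlam (u j) (xhat j))

lemma dualBreg_nonneg (hlam : 0 ≤ lam) (xhat u : Fin n → ℝ) : 0 ≤ dualBreg lam xhat u :=
  (div_nonneg (norm2Sq_nonneg _) two_pos.le).trans (norm2Sq_softShrink_sub_le hlam xhat u)

lemma minAbs_nonneg (x : Fin n → ℝ) : 0 ≤ minAbs x :=
  Real.sInf_nonneg <| by rintro _ ⟨j, -, rfl⟩; exact abs_nonneg _

lemma minAbs_le_abs {x : Fin n → ℝ} {j : Fin n} (hj : x j ≠ 0) : minAbs x ≤ |x j| :=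
  csInf_le ⟨0, by rintro _ ⟨i, -, rfl⟩; exact abs_nonneg _⟩ ⟨j, hj, rfl⟩

lemma minAbs_mul_dualBreg_le (hlam : 0 ≤ lam) (xhat u : Fin n → ℝ) :
    minAbs xhat * dualBreg lam xhat u
      ≤ (minAbs xhat / 2 + 2 * lam) * norm2Sq (softShrink lam u - xhat) := by
  have hgap : minAbs xhat * ∑ j, (lam * |xhat j| - (u j - softShrink lam u j) * xhat j)
      ≤ 2 * lam * norm2Sq (softShrink lam u - xhat) := by
    simp only [norm2Sq, Finset.mul_sum]
    exact Finset.sum_le_sum fun j _ =>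
      mul_sub_softThreshold_gap_le hlam (minAbs_nonneg xhat) minAbs_le_abs (u j)
  rw [dualBreg_eq_gap_add hlam]
  linarith

end Bregman

section SingularValues

variable {m n : ℕ}

lemma sqrt_div_sqrt_le_iff {a b c : ℝ} (hb : 0 < b) (hc : 0 ≤ c) :
    √a / √b ≤ c ↔ a ≤ c ^ 2 * b := by
  rw [← Real.sqrt_div' a hb.le, Real.sqrt_le_left hc, div_le_iff₀ hb]

lemma le_sqrt_div_sqrt_iff {a b c : ℝ} (ha : 0 ≤ a) (hb : 0 < b) (hc : 0 ≤ c) :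
    c ≤ √a / √b ↔ c ^ 2 * b ≤ a := by
  rw [← Real.sqrt_div' a hb.le, Real.le_sqrt hc (div_nonneg ha hb.le), le_div_iff₀ hb]

lemma frobSq_nonneg (A : Matrix (Fin m) (Fin n) ℝ) : 0 ≤ frobSq A :=
  Finset.sum_nonneg fun _ _ => Finset.sum_nonneg fun _ _ => sq_nonneg _

lemma norm2Sq_mulVec_le_frobSq (A : Matrix (Fin m) (Fin n) ℝ) (x : Fin n → ℝ) :
    norm2Sq (A *ᵥ x) ≤ frobSq A * norm2Sq x := by
  rw [norm2Sq, frobSq, Finset.sum_mul]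
  exact Finset.sum_le_sum fun i _ => Finset.sum_mul_sq_le_sq_mul_sq Finset.univ (A i) x

lemma sigmaMax_nonneg (A : Matrix (Fin m) (Fin n) ℝ) : 0 ≤ sigmaMax A :=
  Real.sSup_nonneg <| by rintro _ ⟨x, -, rfl⟩; positivity

lemma norm2Sq_mulVec_le (A : Matrix (Fin m) (Fin n) ℝ) (x : Fin n → ℝ) :
    norm2Sq (A *ᵥ x) ≤ sigmaMax A ^ 2 * norm2Sq x := by
  rcases eq_or_ne x 0 with rfl | hx
  · simp
  have hbdd : BddAbove {t : ℝ | ∃ x : Fin n → ℝ, x ≠ 0 ∧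
      t = √(norm2Sq (A *ᵥ x)) / √(norm2Sq x)} := by
    refine ⟨√(frobSq A), ?_⟩
    rintro _ ⟨y, hy, rfl⟩
    rw [sqrt_div_sqrt_le_iff (norm2Sq_pos hy) (Real.sqrt_nonneg _), Real.sq_sqrt (frobSq_nonneg A)]
    exact norm2Sq_mulVec_le_frobSq A y
  exact (sqrt_div_sqrt_le_iff (norm2Sq_pos hx) (sigmaMax_nonneg A)).1 (le_csSup hbdd ⟨x, hx, rfl⟩)

lemma norm2Sq_vecMul_le (A : Matrix (Fin m) (Fin n) ℝ) (r : Fin m → ℝ) :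
    norm2Sq (r ᵥ* A) ≤ sigmaMax A ^ 2 * norm2Sq r := by
  set v := r ᵥ* A
  have h : norm2Sq v * norm2Sq v ≤ sigmaMax A ^ 2 * norm2Sq r * norm2Sq v := by
    calc norm2Sq v * norm2Sq v = (r ⬝ᵥ (A *ᵥ v)) ^ 2 := by
          rw [dotProduct_mulVec, ← norm2Sq_eq_dotProduct, sq]
      _ ≤ norm2Sq r * norm2Sq (A *ᵥ v) := sq_dotProduct_le r _
      _ ≤ norm2Sq r * (sigmaMax A ^ 2 * norm2Sq v) := by
          gcongr
          · exact norm2Sq_nonneg r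
          · exact norm2Sq_mulVec_le A v
      _ = sigmaMax A ^ 2 * norm2Sq r * norm2Sq v := by ring
  rcases (norm2Sq_nonneg v).eq_or_lt with h0 | hpos
  · rw [← h0]
    exact mul_nonneg (sq_nonneg _) (norm2Sq_nonneg r)
  · exact le_of_mul_le_mul_right h hpos

lemma le_sigmaMax_diagonal (w : Fin m → ℝ) (i : Fin m) : w i ≤ sigmaMax (Matrix.diagonal w) := by
  have h := norm2Sq_mulVec_le (Matrix.diagonal w) (Pi.single i 1)
  have hsingle (c : ℝ) : norm2Sq (Pi.single i c : Fin m → ℝ) = c ^ 2 := by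
    simp [norm2Sq, Pi.single_apply]
  rw [diagonal_mulVec_single, mul_one, hsingle, hsingle, one_pow, mul_one] at h
  exact (le_abs_self _).trans (abs_le_of_sq_le_sq h (sigmaMax_nonneg _))

lemma sigmaTildeMin_nonneg (A : Matrix (Fin m) (Fin n) ℝ) : 0 ≤ sigmaTildeMin A :=
  Real.sInf_nonneg <| by rintro _ ⟨J, -, x, -, -, rfl⟩; positivity

lemma sigmaTildeMin_sq_mul_le (A : Matrix (Fin m) (Fin n) ℝ) (z : Fin n → ℝ) :
    sigmaTildeMin A ^ 2 * norm2Sq z ≤ norm2Sq (A *ᵥ z) := by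
  rcases eq_or_ne z 0 with rfl | hz
  · simp
  by_cases hA : ∃ i j, A i j ≠ 0
  · obtain ⟨i, j, hij⟩ := hA
    have hbdd : BddBelow {t : ℝ | ∃ J : Finset (Fin n), (∃ i j, j ∈ J ∧ A i j ≠ 0) ∧
        ∃ x : Fin n → ℝ, x ≠ 0 ∧ (∀ j ∉ J, x j = 0) ∧
          t = √(norm2Sq (A *ᵥ x)) / √(norm2Sq x)} :=
      ⟨0, by rintro _ ⟨J, -, x, -, -, rfl⟩; positivity⟩
    refine (le_sqrt_div_sqrt_iff (norm2Sq_nonneg _) (norm2Sq_pos hz)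
      (sigmaTildeMin_nonneg A)).1 (csInf_le hbdd ?_)
    exact ⟨Finset.univ, ⟨i, j, Finset.mem_univ j, hij⟩, z, hz,
      fun j hj => absurd (Finset.mem_univ j) hj, rfl⟩
  · have hσ : sigmaTildeMin A = 0 := by
      unfold sigmaTildeMin
      convert Real.sInf_empty
      exact Set.eq_empty_iff_forall_notMem.2 fun _ ⟨_, ⟨i, j, _, hij⟩, _⟩ => hA ⟨i, j, hij⟩
    rw [hσ, zero_pow two_ne_zero, zero_mul]
    exact norm2Sq_nonneg _

end SingularValues

section IidExpectation

variable {ι : Type*} [Fintype ι] (p : ι → ℝ)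

def iidExp (k : ℕ) (F : (Fin k → ι) → ℝ) : ℝ := ∑ τ : Fin k → ι, (∏ t, p (τ t)) * F τ

lemma iidExp_zero (F : (Fin 0 → ι) → ℝ) : iidExp p 0 F = F Fin.elim0 := by
  simp [iidExp, Subsingleton.elim _ (Fin.elim0 : Fin 0 → ι)]

lemma iidExp_succ (k : ℕ) (F : (Fin (k + 1) → ι) → ℝ) :
    iidExp p (k + 1) F = iidExp p k fun σ => ∑ i, p i * F (Fin.snoc σ i) := by
  unfold iidExp
  rw [← (Fin.snocEquiv fun _ => ι).sum_comp, Fintype.sum_prod_type, Finset.sum_comm]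
  refine Finset.sum_congr rfl fun σ _ => ?_
  rw [Finset.mul_sum]
  refine Finset.sum_congr rfl fun i _ => ?_
  simp [Fin.snocEquiv, Fin.prod_univ_castSucc]
  ring

lemma iidExp_add (k : ℕ) (F G : (Fin k → ι) → ℝ) :
    iidExp p k (fun τ => F τ + G τ) = iidExp p k F + iidExp p k G := by
  simp only [iidExp, mul_add, Finset.sum_add_distrib]

lemma iidExp_const_mul (k : ℕ) (c : ℝ) (F : (Fin k → ι) → ℝ) :
    iidExp p k (fun τ => c * F τ) = c * iidExp p k F := by
  simp only [iidExp, Finset.mul_sum]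
  exact Finset.sum_congr rfl fun _ _ => by ring

variable {p}

lemma iidExp_mono (hp : ∀ i, 0 ≤ p i) {k : ℕ} {F G : (Fin k → ι) → ℝ} (h : ∀ τ, F τ ≤ G τ) :
    iidExp p k F ≤ iidExp p k G :=
  Finset.sum_le_sum fun τ _ =>
    mul_le_mul_of_nonneg_left (h τ) (Finset.prod_nonneg fun t _ => hp (τ t))

lemma iidExp_nonneg (hp : ∀ i, 0 ≤ p i) {k : ℕ} {F : (Fin k → ι) → ℝ} (h : ∀ τ, 0 ≤ F τ) :
    0 ≤ iidExp p k F :=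
  Finset.sum_nonneg fun τ _ => mul_nonneg (Finset.prod_nonneg fun t _ => hp (τ t)) (h τ)

lemma iidExp_const (hp : ∑ i, p i = 1) (k : ℕ) (c : ℝ) : iidExp p k (fun _ => c) = c := by
  induction k with
  | zero => rw [iidExp_zero]
  | succ k ih => rw [iidExp_succ, ← Finset.sum_mul, hp, one_mul, ih]

lemma iidExp_sum_apply (hp : ∑ i, p i = 1) (k : ℕ) (g : ι → ℝ) :
    iidExp p k (fun τ => ∑ t, g (τ t)) = k * ∑ i, p i * g i := by
  induction k with
  | zero => simp [iidExp_zero]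
  | succ k ih =>
    have hstep (σ : Fin k → ι) : ∑ i, p i * ∑ t, g ((Fin.snoc σ i : Fin (k + 1) → ι) t)
        = ∑ t, g (σ t) + ∑ i, p i * g i := by
      simp only [Fin.sum_univ_castSucc, Fin.snoc_castSucc, Fin.snoc_last, mul_add,
        Finset.sum_add_distrib, ← Finset.sum_mul, hp, one_mul]
    simp only [iidExp_succ, hstep, iidExp_add, iidExp_const hp, ih]
    push_cast
    ring

lemma iidExp_norm2Sq_sum {n : ℕ} (hp : ∑ i, p i = 1) (k : ℕ) (v : ι → Fin n → ℝ) :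
    iidExp p k (fun τ => norm2Sq (∑ t, v (τ t)))
      = k * ∑ i, p i * norm2Sq (v i) + ((k : ℝ) ^ 2 - k) * norm2Sq (∑ i, p i • v i) := by
  set μ := ∑ i, p i • v i
  induction k with
  | zero => simp [iidExp_zero]
  | succ k ih =>
    have hstep (σ : Fin k → ι) : ∑ i, p i * norm2Sq (∑ t, v ((Fin.snoc σ i : Fin (k + 1) → ι) t))
        = norm2Sq (∑ t, v (σ t)) + 2 * ∑ t, v (σ t) ⬝ᵥ μ + ∑ i, p i * norm2Sq (v i) := by
      have hlin : ∑ i, p i * (2 * ((∑ t, v (σ t)) ⬝ᵥ v i)) = 2 * ∑ t, v (σ t) ⬝ᵥ μ := by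
        simp only [μ, sum_dotProduct, dotProduct_sum, dotProduct_smul, smul_eq_mul,
          Finset.mul_sum]
        rw [Finset.sum_comm]
        exact Finset.sum_congr rfl fun _ _ => Finset.sum_congr rfl fun _ _ => by ring
      simp only [Fin.sum_univ_castSucc, Fin.snoc_castSucc, Fin.snoc_last, norm2Sq_add, mul_add,
        Finset.sum_add_distrib, ← Finset.sum_mul, hp, one_mul, hlin]
    have hcross : ∑ i, p i * (v i ⬝ᵥ μ) = norm2Sq μ := by
      rw [norm2Sq_eq_dotProduct, sum_dotProduct]
      simp only [smul_dotProduct, smul_eq_mul]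
    simp only [iidExp_succ, hstep, iidExp_add, iidExp_const_mul, iidExp_const hp, ih,
      iidExp_sum_apply hp k (fun i => v i ⬝ᵥ μ), hcross]
    push_cast
    ring

end IidExpectation

section Step

variable {m n η : ℕ} {lam : ℝ}

lemma iidExp_dualBreg_sub_avg_le {ι : Type*} [Fintype ι] {p : ι → ℝ} (hη : 0 < η)
    (hlam : 0 ≤ lam) (hp0 : ∀ i, 0 ≤ p i) (hp1 : ∑ i, p i = 1) (xhat u : Fin n → ℝ)
    (v : ι → Fin n → ℝ) :
    iidExp p η (fun τ => dualBreg lam xhat (u - (η : ℝ)⁻¹ • ∑ t, v (τ t)))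
      ≤ dualBreg lam xhat u - (softShrink lam u - xhat) ⬝ᵥ ∑ i, p i • v i
        + (2 * (η : ℝ))⁻¹ * ∑ i, p i * norm2Sq (v i)
        + (η - 1) / (2 * η) * norm2Sq (∑ i, p i • v i) := by
  set g := softShrink lam u - xhat
  have hpoint (τ : Fin η → ι) : dualBreg lam xhat (u - (η : ℝ)⁻¹ • ∑ t, v (τ t))
      ≤ dualBreg lam xhat u + -(η : ℝ)⁻¹ * ∑ t, g ⬝ᵥ v (τ t)
        + (η : ℝ)⁻¹ ^ 2 / 2 * norm2Sq (∑ t, v (τ t)) := by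
    have h := dualBreg_add_le hlam xhat u (-((η : ℝ)⁻¹ • ∑ t, v (τ t)))
    rw [← sub_eq_add_neg, dotProduct_neg, dotProduct_smul, dotProduct_sum, norm2Sq_neg,
      norm2Sq_smul, smul_eq_mul] at h
    linarith
  have hη' : (η : ℝ) ≠ 0 := by positivity
  calc _ ≤ iidExp p η (fun τ => dualBreg lam xhat u + -(η : ℝ)⁻¹ * ∑ t, g ⬝ᵥ v (τ t)
          + (η : ℝ)⁻¹ ^ 2 / 2 * norm2Sq (∑ t, v (τ t))) := iidExp_mono hp0 hpoint
    _ = _ := by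
      rw [iidExp_add, iidExp_add, iidExp_const hp1, iidExp_const_mul, iidExp_const_mul,
        iidExp_sum_apply hp1 η (fun i => g ⬝ᵥ v i), iidExp_norm2Sq_sum hp1, dotProduct_sum]
      simp only [dotProduct_smul, smul_eq_mul]
      field_simp
      ring

def kaczmarzDir (A : Matrix (Fin m) (Fin n) ℝ) (w r : Fin m → ℝ) (i : Fin m) : Fin n → ℝ :=
  (w i * r i / rowNormSq A i) • A i

lemma rskaStep_eq (A : Matrix (Fin m) (Fin n) ℝ) (b : Fin m → ℝ) (lam : ℝ) (w : Fin m → ℝ)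
    (η : ℕ) (u : Fin n → ℝ) (τ : Fin η → Fin m) :
    rskaStep A b lam w η u τ
      = u - (η : ℝ)⁻¹ • ∑ t, kaczmarzDir A w (A *ᵥ softShrink lam u - b) (τ t) := rfl

variable {A : Matrix (Fin m) (Fin n) ℝ} {w p : Fin m → ℝ} {β : ℝ}

lemma sum_smul_kaczmarzDir (hcoup : ∀ i, p i * w i / rowNormSq A i = β) (r : Fin m → ℝ) :
    ∑ i, p i • kaczmarzDir A w r i = β • (r ᵥ* A) := by
  funext j
  simp only [Finset.sum_apply, Pi.smul_apply, smul_eq_mul, vecMul, dotProduct, Finset.mul_sum,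
    kaczmarzDir]
  refine Finset.sum_congr rfl fun i _ => ?_
  rw [← hcoup i]
  ring

lemma sum_mul_norm2Sq_kaczmarzDir_le (hβ : 0 ≤ β) (hcoup : ∀ i, p i * w i / rowNormSq A i = β)
    (r : Fin m → ℝ) :
    ∑ i, p i * norm2Sq (kaczmarzDir A w r i) ≤ β * sigmaMax (diagonal w) * norm2Sq r := by
  have hterm (i : Fin m) : p i * norm2Sq (kaczmarzDir A w r i) = β * (w i * r i ^ 2) := by
    rw [kaczmarzDir, norm2Sq_smul, ← hcoup i]
    change p i * ((w i * r i / rowNormSq A i) ^ 2 * rowNormSq A i) = _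
    -- a zero row gives `0 = 0` through `x / 0 = 0`
    rcases eq_or_ne (rowNormSq A i) 0 with h | h
    · simp [h]
    · field_simp
  rw [Finset.sum_congr rfl fun i _ => hterm i]
  simp only [norm2Sq, Finset.mul_sum]
  exact Finset.sum_le_sum fun i _ => by
    rw [mul_assoc]
    exact mul_le_mul_of_nonneg_left
      (mul_le_mul_of_nonneg_right (le_sigmaMax_diagonal w i) (sq_nonneg _)) hβ

/-- `L(α) / ‖A‖_F²` for `β = α / ‖A‖_F²`. -/
def rskaRate (β : ℝ) (η : ℕ) (σA σW : ℝ) : ℝ := β - β / (2 * η) * (β * (η - 1) * σA ^ 2 + σW)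

lemma iidExp_dualBreg_rskaStep_le (hη : 0 < η) (hlam : 0 ≤ lam) (hp0 : ∀ i, 0 ≤ p i)
    (hp1 : ∑ i, p i = 1) (hβ : 0 ≤ β) (hcoup : ∀ i, p i * w i / rowNormSq A i = β)
    {b : Fin m → ℝ} {xhat : Fin n → ℝ} (hxhat : A *ᵥ xhat = b) (u : Fin n → ℝ) :
    iidExp p η (fun τ => dualBreg lam xhat (rskaStep A b lam w η u τ))
      ≤ dualBreg lam xhat u - rskaRate β η (sigmaMax A) (sigmaMax (diagonal w))
          * norm2Sq (A *ᵥ softShrink lam u - b) := by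
  simp only [rskaStep_eq]
  set r := A *ᵥ softShrink lam u - b
  have hlin : (softShrink lam u - xhat) ⬝ᵥ (β • (r ᵥ* A)) = β * norm2Sq r := by
    rw [dotProduct_smul, dotProduct_comm, ← dotProduct_mulVec, mulVec_sub, hxhat,
      norm2Sq_eq_dotProduct, smul_eq_mul]
  have hquad : norm2Sq (β • (r ᵥ* A)) ≤ β ^ 2 * (sigmaMax A ^ 2 * norm2Sq r) := by
    rw [norm2Sq_smul]
    exact mul_le_mul_of_nonneg_left (norm2Sq_vecMul_le A r) (sq_nonneg β)
  have hdiag := sum_mul_norm2Sq_kaczmarzDir_le hβ hcoup r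
  have h := iidExp_dualBreg_sub_avg_le hη hlam hp0 hp1 xhat u (kaczmarzDir A w r)
  rw [sum_smul_kaczmarzDir hcoup, hlin] at h
  have hη1 : (0 : ℝ) ≤ (η - 1) / (2 * η) :=
    div_nonneg (sub_nonneg.2 (by exact_mod_cast hη)) (by positivity)
  calc _ ≤ _ := h
    _ ≤ dualBreg lam xhat u - β * norm2Sq r
          + (2 * (η : ℝ))⁻¹ * (β * sigmaMax (diagonal w) * norm2Sq r)
          + (η - 1) / (2 * η) * (β ^ 2 * (sigmaMax A ^ 2 * norm2Sq r)) := by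
      gcongr
    _ = _ := by
      unfold rskaRate
      ring

end Step

section Convergence

variable {m n η : ℕ} {lam : ℝ}

lemma rskaRate_nonneg {α F σA σW : ℝ} (hη : 1 < η) (hα : 0 < α) (hF : 0 ≤ F)
    (hαub : α < 2 * ((η - σW / 2) * F) / (σA ^ 2 * (η - 1))) :
    0 ≤ rskaRate (α / F) η σA σW := by
  have hη' : (1 : ℝ) < η := by exact_mod_cast hη
  rcases (mul_nonneg (sq_nonneg σA) (sub_nonneg.2 hη'.le)).eq_or_lt with h0 | hd
  · rw [← h0, div_zero] at hαub
    linarith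
  rw [lt_div_iff₀ hd] at hαub
  rcases hF.eq_or_lt with rfl | hF
  · nlinarith [mul_pos hα hd]
  have hX : α / F * (η - 1) * σA ^ 2 + σW ≤ 2 * η := by
    rw [div_mul_eq_mul_div, div_mul_eq_mul_div, div_add' _ _ _ hF.ne', div_le_iff₀ hF]
    linarith
  unfold rskaRate
  have h2η : (0 : ℝ) < 2 * η := by positivity
  have := mul_le_mul_of_nonneg_left hX (by positivity : 0 ≤ α / F / (2 * η))
  rw [div_mul_cancel₀ _ h2η.ne'] at this
  linarith

lemma minAbs_mul_sigmaTildeMin_sq_mul_dualBreg_le (hlam : 0 ≤ lam) {A : Matrix (Fin m) (Fin n) ℝ}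
    {b : Fin m → ℝ} {xhat : Fin n → ℝ} (hxhat : A *ᵥ xhat = b) (u : Fin n → ℝ) :
    minAbs xhat * sigmaTildeMin A ^ 2 * dualBreg lam xhat u
      ≤ (minAbs xhat + 2 * lam) * norm2Sq (A *ᵥ softShrink lam u - b) := by
  set z := softShrink lam u - xhat
  have hm := minAbs_nonneg xhat
  have hD : minAbs xhat * dualBreg lam xhat u ≤ (minAbs xhat + 2 * lam) * norm2Sq z :=
    (minAbs_mul_dualBreg_le hlam xhat u).trans <| by
      gcongr
      · exact norm2Sq_nonneg z
      · linarith
  calc minAbs xhat * sigmaTildeMin A ^ 2 * dualBreg lam xhat u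
      = sigmaTildeMin A ^ 2 * (minAbs xhat * dualBreg lam xhat u) := by ring
    _ ≤ sigmaTildeMin A ^ 2 * ((minAbs xhat + 2 * lam) * norm2Sq z) := by gcongr
    _ = (minAbs xhat + 2 * lam) * (sigmaTildeMin A ^ 2 * norm2Sq z) := by ring
    _ ≤ (minAbs xhat + 2 * lam) * norm2Sq (A *ᵥ z) := by
      gcongr
      exact sigmaTildeMin_sq_mul_le A z
    _ = _ := by rw [mulVec_sub, hxhat]

lemma le_one_sub_div_mul_of_le_sub {E D κ R a c : ℝ} (hE : E ≤ D - κ * R) (hκ : 0 ≤ κ)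
    (hc : 0 < c) (hD : a * D ≤ c * R) : E ≤ (1 - κ / (c / a)) * D := by
  have hR : a * D / c ≤ R := by rw [div_le_iff₀ hc]; linarith
  calc E ≤ D - κ * R := hE
    _ ≤ D - κ * (a * D / c) := by gcongr
    _ = (1 - κ / (c / a)) * D := by rw [div_div_eq_mul_div]; ring

lemma le_pow_mul_of_succ_le_mul {E : ℕ → ℝ} {q : ℝ} (hE : ∀ k, 0 ≤ E k)
    (h : ∀ k, E (k + 1) ≤ q * E k) (k : ℕ) : E k ≤ q ^ k * E 0 := by
  rcases le_or_gt 0 q with hq | hq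
  · exact le_geom hq k fun j _ => h j
  have hzero (j : ℕ) : E j = 0 := by
    induction j with
    | zero => nlinarith [h 0, hE 0, hE 1]
    | succ j ih => exact le_antisymm ((h j).trans (by rw [ih, mul_zero])) (hE _)
  rw [hzero, hzero, mul_zero]

lemma rskaSeq_succ_snoc (A : Matrix (Fin m) (Fin n) ℝ) (b : Fin m → ℝ) (lam : ℝ)
    (w : Fin m → ℝ) {k : ℕ} (σ : Fin k → Fin η → Fin m) (τ : Fin η → Fin m) :
    rskaSeq A b lam w η (k + 1) (Fin.snoc σ τ : Fin (k + 1) → Fin η → Fin m)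
      = rskaStep A b lam w η (rskaSeq A b lam w η k σ) τ := by
  simp only [rskaSeq, Fin.snoc_castSucc, Fin.snoc_last]

lemma iidExp_dualBreg_rskaSeq_le (hlam : 0 ≤ lam) {A : Matrix (Fin m) (Fin n) ℝ}
    {b : Fin m → ℝ} {w p : Fin m → ℝ} (hp0 : ∀ i, 0 ≤ p i) {xhat : Fin n → ℝ} {q : ℝ}
    (hcontract : ∀ u, iidExp p η (fun τ => dualBreg lam xhat (rskaStep A b lam w η u τ))
      ≤ q * dualBreg lam xhat u) (k : ℕ) :
    iidExp (fun τ : Fin η → Fin m => ∏ t, p (τ t)) k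
        (fun σ => dualBreg lam xhat (rskaSeq A b lam w η k σ))
      ≤ q ^ k * fObj lam xhat := by
  have hP (τ : Fin η → Fin m) : 0 ≤ ∏ t, p (τ t) := Finset.prod_nonneg fun t _ => hp0 (τ t)
  have h := le_pow_mul_of_succ_le_mul
    (E := fun k => iidExp (fun τ : Fin η → Fin m => ∏ t, p (τ t)) k
      (fun σ => dualBreg lam xhat (rskaSeq A b lam w η k σ)))
    (q := q) (fun k => iidExp_nonneg hP fun σ => dualBreg_nonneg hlam _ _) (fun k => ?_) k
  · simpa only [iidExp_zero, rskaSeq, dualBreg_zero hlam] using h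
  · rw [iidExp_succ, ← iidExp_const_mul]
    refine iidExp_mono hP fun σ => ?_
    simp only [rskaSeq_succ_snoc]
    exact hcontract _

end Convergence

theorem rska_linear_convergence_norm_general {m n η : ℕ} (hη : 1 < η)
    (A : Matrix (Fin m) (Fin n) ℝ)
    (b : Fin m → ℝ) (lam : ℝ) (hlam : 0 < lam)
    (w p : Fin m → ℝ) (hp0 : ∀ i, 0 ≤ p i) (hp1 : ∑ i, p i = 1)
    (α : ℝ) (hα : 0 < α)
    (hcoup : ∀ i, p i * w i / rowNormSq A i = α / frobSq A)
    (hαub : α < 2 * (((η : ℝ) - sigmaMax (Matrix.diagonal w) / 2) * frobSq A)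
        / (sigmaMax A ^ 2 * ((η : ℝ) - 1)))
    (xhat : Fin n → ℝ) (hxhat : A.mulVec xhat = b) :
    let γ : ℝ := (minAbs xhat + 2 * lam) / (minAbs xhat * sigmaTildeMin A ^ 2)
    let L : ℝ := α - α / (2 * (η : ℝ)) *
      (α / frobSq A * ((η : ℝ) - 1) * sigmaMax A ^ 2 + sigmaMax (Matrix.diagonal w))
    let q : ℝ := 1 - L / (γ * frobSq A)
    ∀ k : ℕ,
      ∑ σ : Fin k → Fin η → Fin m, histProb p k σ *
          norm2Sq (softShrink lam (rskaSeq A b lam w η k σ) - xhat)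
        ≤ 2 * q ^ k * fObj lam xhat := by
  intro γ L q k
  have hq : q = 1 - rskaRate (α / frobSq A) η (sigmaMax A) (sigmaMax (diagonal w)) /
      ((minAbs xhat + 2 * lam) / (minAbs xhat * sigmaTildeMin A ^ 2)) := by
    simp only [q, γ, L, rskaRate]
    rw [mul_comm, div_mul_eq_div_div]
    ring
  have hcontract (u : Fin n → ℝ) :
      iidExp p η (fun τ => dualBreg lam xhat (rskaStep A b lam w η u τ))
        ≤ q * dualBreg lam xhat u := by
    rw [hq]
    exact le_one_sub_div_mul_of_le_sub
      (iidExp_dualBreg_rskaStep_le (by omega) hlam.le hp0 hp1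
        (div_nonneg hα.le (frobSq_nonneg A)) hcoup hxhat u)
      (rskaRate_nonneg hη hα (frobSq_nonneg A) hαub) (by linarith [minAbs_nonneg xhat])
      (minAbs_mul_sigmaTildeMin_sq_mul_dualBreg_le hlam.le hxhat u)
  have hP (τ : Fin η → Fin m) : 0 ≤ ∏ t, p (τ t) := Finset.prod_nonneg fun t _ => hp0 (τ t)
  calc _ ≤ iidExp (fun τ : Fin η → Fin m => ∏ t, p (τ t)) k
          (fun σ => 2 * dualBreg lam xhat (rskaSeq A b lam w η k σ)) :=
        iidExp_mono hP fun σ => by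
          linarith [norm2Sq_softShrink_sub_le hlam.le xhat (rskaSeq A b lam w η k σ)]
    _ ≤ 2 * (q ^ k * fObj lam xhat) := by
      rw [iidExp_const_mul]
      gcongr
      exact iidExp_dualBreg_rskaSeq_le hlam.le hp0 hcontract k
    _ = 2 * q ^ k * fObj lam xhat := by ring

/-- (Linear expected convergence of RSKA, squared-norm version.)
Under the hypotheses of the linear-convergence theorem for RSKA, the iterates satisfy
`E[‖x_k − x̂‖₂²] ≤ 2 q^k f(x̂)` with `q = 1 − L(α)/(γ‖A‖_F²)`. -/
theorem rska_linear_convergence_norm {m n η : ℕ} (hη : 1 < η)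
    (A : Matrix (Fin m) (Fin n) ℝ) (hA : ∀ i, A i ≠ 0)
    (b : Fin m → ℝ) (lam : ℝ) (hlam : 0 < lam)
    (w p : Fin m → ℝ) (hp0 : ∀ i, 0 ≤ p i) (hp1 : ∑ i, p i = 1)
    (α : ℝ) (hα : 0 < α)
    (hcoup : ∀ i, p i * w i / rowNormSq A i = α / frobSq A)
    (hαub : α < 2 * (((η : ℝ) - sigmaMax (Matrix.diagonal w) / 2) * frobSq A)
        / (sigmaMax A ^ 2 * ((η : ℝ) - 1)))
    (xhat : Fin n → ℝ) (hxhat : A.mulVec xhat = b)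
    (hmin : ∀ x, A.mulVec x = b → fObj lam xhat ≤ fObj lam x) :
    let γ : ℝ := (minAbs xhat + 2 * lam) / (minAbs xhat * sigmaTildeMin A ^ 2)
    let L : ℝ := α - α / (2 * (η : ℝ)) *
      (α / frobSq A * ((η : ℝ) - 1) * sigmaMax A ^ 2 + sigmaMax (Matrix.diagonal w))
    let q : ℝ := 1 - L / (γ * frobSq A)
    ∀ k : ℕ,
      ∑ σ : Fin k → Fin η → Fin m, histProb p k σ *
          norm2Sq (softShrink lam (rskaSeq A b lam w η k σ) - xhat)
        ≤ 2 * q ^ k * fObj lam xhat :=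
  rska_linear_convergence_norm_general hη A b lam hlam w p hp0 hp1 α hα hcoup hαub xhat hxhat
end
end
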